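/- arXiv:2312.10963 — 6 statements merged into one kernel-verified Lean document; each statement's English description precedes it below -/
import Mathlib

section
/- Let 𝓔, 𝓕, 𝓖, 𝓗 be vector spaces over a field k and let A : 𝓔 → 𝓕, B : 𝓖 → 𝓗, P : 𝓖 → 𝓔, Q : 𝓔 → 𝓖, R : 𝓗 → 𝓕, S : 𝓕 → 𝓗, T : 𝓕 → 𝓔 be linear maps. If A is a silvern transmutation of B by philosopher's stone (P,Q,R,S,T), then ker A = P(ker B) and ker A ∩ ker Q = 0. -/
/-!
Pre-regeneration `P ∘ Q + T ∘ A = id` says that `P ∘ Q` is the identity on `ker A`. Hence every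
`x ∈ ker A` equals `P (Q x)`, where `Q x ∈ ker B` by pre-catalysis; and if moreover `Q x = 0` then
`x = 0`. Conversely post-catalysis `A ∘ P = R ∘ B` makes `P` send `ker B` into `ker A`.
-/

namespace LinearMap

variable {K : Type*} [Semiring K] {E F G H : Type*}
  [AddCommMonoid E] [Module K E] [AddCommMonoid F] [Module K F]
  [AddCommMonoid G] [Module K G] [AddCommMonoid H] [Module K H]

theorem map_ker_le_ker_of_comp_eq_comp {A : E →ₗ[K] F} {B : G →ₗ[K] H} {P : G →ₗ[K] E}
    {R : H →ₗ[K] F} (hpost : A ∘ₗ P = R ∘ₗ B) : (ker B).map P ≤ ker A := by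
  rw [Submodule.map_le_iff_le_comap, ← ker_comp, hpost]
  exact ker_le_ker_comp B R

theorem ker_le_comap_ker_of_comp_eq_comp {A : E →ₗ[K] F} {B : G →ₗ[K] H} {Q : E →ₗ[K] G}
    {S : F →ₗ[K] H} (hpre : B ∘ₗ Q = S ∘ₗ A) : ker A ≤ (ker B).comap Q := by
  rw [← ker_comp, hpre]
  exact ker_le_ker_comp A S

theorem apply_apply_eq_self_of_mem_ker {A : E →ₗ[K] F} {P : G →ₗ[K] E} {Q : E →ₗ[K] G}
    {T : F →ₗ[K] E} (hreg : P ∘ₗ Q + T ∘ₗ A = id) {x : E} (hx : x ∈ ker A) : P (Q x) = x := by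
  simpa [mem_ker.1 hx] using LinearMap.congr_fun hreg x

theorem ker_le_map_ker_of_comp_eq_comp_of_add_comp_eq_id {A : E →ₗ[K] F} {B : G →ₗ[K] H}
    {P : G →ₗ[K] E} {Q : E →ₗ[K] G} {S : F →ₗ[K] H} {T : F →ₗ[K] E}
    (hpre : B ∘ₗ Q = S ∘ₗ A) (hreg : P ∘ₗ Q + T ∘ₗ A = id) : ker A ≤ (ker B).map P :=
  fun x hx ↦ ⟨Q x, ker_le_comap_ker_of_comp_eq_comp hpre hx,
    apply_apply_eq_self_of_mem_ker hreg hx⟩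

theorem ker_inf_ker_eq_bot_of_add_comp_eq_id {A : E →ₗ[K] F} {P : G →ₗ[K] E} {Q : E →ₗ[K] G}
    {T : F →ₗ[K] E} (hreg : P ∘ₗ Q + T ∘ₗ A = id) : ker A ⊓ ker Q = ⊥ := by
  refine eq_bot_iff.2 fun x ⟨hA, hQ⟩ ↦ ?_
  rw [Submodule.mem_bot, ← apply_apply_eq_self_of_mem_ker hreg hA, mem_ker.1 hQ, map_zero]

end LinearMap

/-- If `A` is a silvern transmutation of `B` by philosopher's stone `(P,Q,R,S,T)`
(post-catalysis `A∘P = R∘B`, pre-catalysis `B∘Q = S∘A`,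
pre-regeneration `P∘Q + T∘A = id`), then `ker A = P(ker B)` and `ker A ∩ ker Q = 0`. -/
theorem silvern_ker_eq_map_and_disjoint
    {k : Type*} [Field k]
    {E F G H : Type*}
    [AddCommGroup E] [Module k E] [AddCommGroup F] [Module k F]
    [AddCommGroup G] [Module k G] [AddCommGroup H] [Module k H]
    (A : E →ₗ[k] F) (B : G →ₗ[k] H) (P : G →ₗ[k] E) (Q : E →ₗ[k] G)
    (R : H →ₗ[k] F) (S : F →ₗ[k] H) (T : F →ₗ[k] E)
    (hpost : A ∘ₗ P = R ∘ₗ B)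
    (hpre : B ∘ₗ Q = S ∘ₗ A)
    (hreg : P ∘ₗ Q + T ∘ₗ A = LinearMap.id) :
    LinearMap.ker A = Submodule.map P (LinearMap.ker B) ∧
    LinearMap.ker A ⊓ LinearMap.ker Q = ⊥ :=
  ⟨le_antisymm (LinearMap.ker_le_map_ker_of_comp_eq_comp_of_add_comp_eq_id hpre hreg)
      (LinearMap.map_ker_le_ker_of_comp_eq_comp hpost),
    LinearMap.ker_inf_ker_eq_bot_of_add_comp_eq_id hreg⟩
end

section
/- Let 𝓔, 𝓕, 𝓖, 𝓗 be vector spaces over a field k and let A : 𝓔 → 𝓕, B : 𝓖 → 𝓗, P : 𝓖 → 𝓔, Q : 𝓔 → 𝓖, R : 𝓗 → 𝓕, S : 𝓕 → 𝓗, T : 𝓕 → 𝓔 be linear maps. If A is a proper silvern transmutation of B by philosopher's stone (P,Q,R,S,T), then ker B ⊆ ker(id_𝓖 − Q∘P), and there exists a linear map T̃ : 𝓗 → 𝓖 with T̃∘B = id_𝓖 − Q∘P; moreover for any such T̃, B is a proper silvern transmutation of A by philosopher's stone (Q,P,S,R,T̃), and the restriction of T̃ to the range of B is uniquely determined. -/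
/-!
For `x ∈ ker B`, post-catalysis gives `A (P x) = R (B x) = 0`, so pre-regeneration at `P x`
reads `P (Q (P x)) = P x`, while pre-catalysis gives `B (Q (P x)) = S (A (P x)) = 0`. Hence
`x - Q (P x) ∈ ker B ⊓ ker P = 0`, i.e. `id - Q∘P` kills `ker B`, and over a field it then
factors through `B`. Properness of the reverse transmutation is read off pre-regeneration:
`x = P (Q x) + T (A x)` vanishes when `A x = 0` and `Q x = 0`.
-/

open LinearMap

theorem LinearMap.exists_comp_eq_of_ker_le {K V V' W : Type*} [DivisionRing K]
    [AddCommGroup V] [Module K V] [AddCommGroup V'] [Module K V'] [AddCommGroup W] [Module K W]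
    {g : V →ₗ[K] V'} {f : V →ₗ[K] W} (h : ker g ≤ ker f) : ∃ f' : V' →ₗ[K] W, f' ∘ₗ g = f := by
  obtain ⟨f', hf'⟩ := ((ker g).liftQ f h ∘ₗ g.quotKerEquivRange.symm.toLinearMap).exists_extend
  refine ⟨f', LinearMap.ext fun x => ?_⟩
  simpa using LinearMap.congr_fun hf' ⟨g x, mem_range_self g x⟩

section Transmutation

variable {R E F G H : Type*} [Ring R]
  [AddCommGroup E] [Module R E] [AddCommGroup F] [Module R F]
  [AddCommGroup G] [Module R G] [AddCommGroup H] [Module R H]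
  {A : E →ₗ[R] F} {B : G →ₗ[R] H} {P : G →ₗ[R] E} {Q : E →ₗ[R] G}

theorem ker_inf_ker_eq_bot_of_comp_add_comp_eq_id {T : F →ₗ[R] E}
    (hreg : P ∘ₗ Q + T ∘ₗ A = LinearMap.id) : ker A ⊓ ker Q = ⊥ := by
  rw [eq_bot_iff]
  rintro x ⟨hA, hQ⟩
  rw [Submodule.mem_bot]
  calc x = P (Q x) + T (A x) := (LinearMap.congr_fun hreg x).symm
    _ = 0 := by rw [hA, hQ, map_zero, map_zero, add_zero]

theorem ker_le_ker_id_sub_comp {R' : H →ₗ[R] F} {S : F →ₗ[R] H} {T : F →ₗ[R] E}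
    (hpost : A ∘ₗ P = R' ∘ₗ B) (hpre : B ∘ₗ Q = S ∘ₗ A)
    (hreg : P ∘ₗ Q + T ∘ₗ A = LinearMap.id) (hproper : ker B ⊓ ker P = ⊥) :
    ker B ≤ ker (LinearMap.id - Q ∘ₗ P) := by
  intro x hx
  rw [mem_ker] at hx
  have hAP : A (P x) = 0 := by simpa [hx] using LinearMap.congr_fun hpost x
  have hPQP : P (Q (P x)) = P x := by simpa [hAP] using LinearMap.congr_fun hreg (P x)
  have hBQP : B (Q (P x)) = 0 := by simpa [hAP] using LinearMap.congr_fun hpre (P x)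
  have hmem : x - Q (P x) ∈ ker B ⊓ ker P := ⟨by simp [hx, hBQP], by simp [hPQP]⟩
  simpa [hproper] using hmem

end Transmutation

/-- If `A` is a proper silvern transmutation of `B` by philosopher's stone `(P,Q,R,S,T)`
(post-catalysis `A∘P = R∘B`, pre-catalysis `B∘Q = S∘A`, pre-regeneration `P∘Q + T∘A = id`,
properness `ker B ∩ ker P = 0`), then `ker B ⊆ ker (id − Q∘P)`, there exists `T̃` with
`T̃∘B = id − Q∘P`, any such `T̃` makes `B` a proper silvern transmutation of `A` by
`(Q,P,S,R,T̃)`, and `T̃` is uniquely determined on the range of `B`. -/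
theorem proper_silvern_symm
    {k : Type*} [Field k]
    {E F G H : Type*}
    [AddCommGroup E] [Module k E] [AddCommGroup F] [Module k F]
    [AddCommGroup G] [Module k G] [AddCommGroup H] [Module k H]
    (A : E →ₗ[k] F) (B : G →ₗ[k] H) (P : G →ₗ[k] E) (Q : E →ₗ[k] G)
    (R : H →ₗ[k] F) (S : F →ₗ[k] H) (T : F →ₗ[k] E)
    (hpost : A ∘ₗ P = R ∘ₗ B)
    (hpre : B ∘ₗ Q = S ∘ₗ A)
    (hreg : P ∘ₗ Q + T ∘ₗ A = LinearMap.id)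
    (hproper : LinearMap.ker B ⊓ LinearMap.ker P = ⊥) :
    LinearMap.ker B ≤ LinearMap.ker (LinearMap.id - Q ∘ₗ P) ∧
    (∃ T' : H →ₗ[k] G, T' ∘ₗ B = LinearMap.id - Q ∘ₗ P) ∧
    (∀ T' : H →ₗ[k] G, T' ∘ₗ B = LinearMap.id - Q ∘ₗ P →
      (B ∘ₗ Q = S ∘ₗ A ∧ A ∘ₗ P = R ∘ₗ B ∧
       Q ∘ₗ P + T' ∘ₗ B = LinearMap.id ∧
       LinearMap.ker A ⊓ LinearMap.ker Q = ⊥)) ∧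
    (∀ T₁ T₂ : H →ₗ[k] G, T₁ ∘ₗ B = LinearMap.id - Q ∘ₗ P →
      T₂ ∘ₗ B = LinearMap.id - Q ∘ₗ P →
      ∀ y ∈ LinearMap.range B, T₁ y = T₂ y) := by
  have hker := ker_le_ker_id_sub_comp hpost hpre hreg hproper
  refine ⟨hker, exists_comp_eq_of_ker_le hker, fun T' hT' => ⟨hpre, hpost, ?_,
    ker_inf_ker_eq_bot_of_comp_add_comp_eq_id hreg⟩, ?_⟩
  · rw [hT', add_sub_cancel]
  · rintro T₁ T₂ h₁ h₂ _ ⟨x, rfl⟩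
    exact LinearMap.congr_fun (h₁.trans h₂.symm) x
end

section
/- Let 𝓔, 𝓕, 𝓖, 𝓗, 𝓖̃, 𝓗̃ be vector spaces over a field k and let A : 𝓔 → 𝓕, B : 𝓖 → 𝓗, C : 𝓖̃ → 𝓗̃ be linear maps. Suppose A is a silvern transmutation of B by philosopher's stone (P₁,Q₁,R₁,S₁,T₁) (with P₁ : 𝓖 → 𝓔, Q₁ : 𝓔 → 𝓖, R₁ : 𝓗 → 𝓕, S₁ : 𝓕 → 𝓗, T₁ : 𝓕 → 𝓔) and B is a silvern transmutation of C by philosopher's stone (P₂,Q₂,R₂,S₂,T₂) (with P₂ : 𝓖̃ → 𝓖, Q₂ : 𝓖 → 𝓖̃, R₂ : 𝓗̃ → 𝓗, S₂ : 𝓗 → 𝓗̃, T₂ : 𝓗 → 𝓖). Then A is a silvern transmutation of C by philosopher's stone (P₁∘P₂, Q₂∘Q₁, R₁∘R₂, S₂∘S₁, T₁ + P₁∘T₂∘S₁). Moreover, if both given transmutations are proper silvern transmutations, then so is the resulting one. -/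
/-!
Post-catalysis squares paste along `B`, so composing the catalysts gives the post- and
pre-catalysis of `A` by `C`. For regeneration, inserting `P₂ Q₂ + T₂ B = id` between `P₁` and
`Q₁` and rewriting `B Q₁ = S₁ A` turns `P₁ Q₁` into `P₁ P₂ Q₂ Q₁ + P₁ T₂ S₁ A`. Properness
passes along because `C x = 0` forces `B (P₂ x) = R₂ (C x) = 0`.
-/

namespace LinearMap

variable {R : Type*} [Semiring R] {E F G H G' H' : Type*}
  [AddCommMonoid E] [Module R E] [AddCommMonoid F] [Module R F]
  [AddCommMonoid G] [Module R G] [AddCommMonoid H] [Module R H]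
  [AddCommMonoid G'] [Module R G'] [AddCommMonoid H'] [Module R H']

/-- `A` is a pre-catalysis of `B` by `(Q, S)` exactly when `B` is a post-catalysis of `A`
by `(Q, S)`, so only post-catalysis gets a definition. -/
def IsPostCatalysis (A : E →ₗ[R] F) (B : G →ₗ[R] H) (P : G →ₗ[R] E) (Q : H →ₗ[R] F) : Prop :=
  A ∘ₗ P = Q ∘ₗ B

def IsPreRegenerated (A : E →ₗ[R] F) (P : G →ₗ[R] E) (Q : E →ₗ[R] G) (T : F →ₗ[R] E) :
    Prop :=
  P ∘ₗ Q + T ∘ₗ A = id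

theorem IsPostCatalysis.trans {A : E →ₗ[R] F} {B : G →ₗ[R] H} {C : G' →ₗ[R] H'}
    {P₁ : G →ₗ[R] E} {R₁ : H →ₗ[R] F} {P₂ : G' →ₗ[R] G} {R₂ : H' →ₗ[R] H}
    (h₁ : IsPostCatalysis A B P₁ R₁) (h₂ : IsPostCatalysis B C P₂ R₂) :
    IsPostCatalysis A C (P₁ ∘ₗ P₂) (R₁ ∘ₗ R₂) := by
  unfold IsPostCatalysis at *
  rw [← comp_assoc, h₁, comp_assoc, h₂, comp_assoc]

theorem IsPreRegenerated.trans {A : E →ₗ[R] F} {B : G →ₗ[R] H}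
    {P₁ : G →ₗ[R] E} {Q₁ : E →ₗ[R] G} {S₁ : F →ₗ[R] H} {T₁ : F →ₗ[R] E}
    {P₂ : G' →ₗ[R] G} {Q₂ : G →ₗ[R] G'} {T₂ : H →ₗ[R] G}
    (h₁ : IsPreRegenerated A P₁ Q₁ T₁) (h₂ : IsPreRegenerated B P₂ Q₂ T₂)
    (hpre : IsPostCatalysis B A Q₁ S₁) :
    IsPreRegenerated A (P₁ ∘ₗ P₂) (Q₂ ∘ₗ Q₁) (T₁ + P₁ ∘ₗ T₂ ∘ₗ S₁) := by
  unfold IsPreRegenerated IsPostCatalysis at *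
  calc (P₁ ∘ₗ P₂) ∘ₗ (Q₂ ∘ₗ Q₁) + (T₁ + P₁ ∘ₗ T₂ ∘ₗ S₁) ∘ₗ A
      = P₁ ∘ₗ (P₂ ∘ₗ Q₂ + T₂ ∘ₗ B) ∘ₗ Q₁ + T₁ ∘ₗ A := by
        simp only [add_comp, comp_add, comp_assoc, hpre]
        abel
    _ = id := by rw [h₂, id_comp, h₁]

theorem ker_inf_ker_comp_eq_bot {B : G →ₗ[R] H} {C : G' →ₗ[R] H'} {P₁ : G →ₗ[R] E}
    {P₂ : G' →ₗ[R] G} {R₂ : H' →ₗ[R] H} (hpost : IsPostCatalysis B C P₂ R₂)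
    (h₁ : ker B ⊓ ker P₁ = ⊥) (h₂ : ker C ⊓ ker P₂ = ⊥) :
    ker C ⊓ ker (P₁ ∘ₗ P₂) = ⊥ := by
  rw [Submodule.eq_bot_iff] at *
  rintro x ⟨hCx, hPx⟩
  have hBPx : B (P₂ x) = 0 := by
    rw [← comp_apply, hpost, comp_apply, mem_ker.mp hCx, map_zero]
  exact h₂ x ⟨hCx, h₁ (P₂ x) ⟨hBPx, hPx⟩⟩

end LinearMap

/-- Transitivity of silvern transmutations: if `A` is a silvern transmutation of `B` by
`(P₁,Q₁,R₁,S₁,T₁)` and `B` is a silvern transmutation of `C` by `(P₂,Q₂,R₂,S₂,T₂)`, then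
`A` is a silvern transmutation of `C` by `(P₁∘P₂, Q₂∘Q₁, R₁∘R₂, S₂∘S₁, T₁ + P₁∘T₂∘S₁)`;
if moreover both are proper then so is the composite. -/
theorem silvern_trans
    {k : Type*} [Field k]
    {E F G H G' H' : Type*}
    [AddCommGroup E] [Module k E] [AddCommGroup F] [Module k F]
    [AddCommGroup G] [Module k G] [AddCommGroup H] [Module k H]
    [AddCommGroup G'] [Module k G'] [AddCommGroup H'] [Module k H']
    (A : E →ₗ[k] F) (B : G →ₗ[k] H) (C : G' →ₗ[k] H')
    (P₁ : G →ₗ[k] E) (Q₁ : E →ₗ[k] G) (R₁ : H →ₗ[k] F) (S₁ : F →ₗ[k] H) (T₁ : F →ₗ[k] E)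
    (P₂ : G' →ₗ[k] G) (Q₂ : G →ₗ[k] G') (R₂ : H' →ₗ[k] H) (S₂ : H →ₗ[k] H') (T₂ : H →ₗ[k] G)
    (hpost₁ : A ∘ₗ P₁ = R₁ ∘ₗ B)
    (hpre₁ : B ∘ₗ Q₁ = S₁ ∘ₗ A)
    (hreg₁ : P₁ ∘ₗ Q₁ + T₁ ∘ₗ A = LinearMap.id)
    (hpost₂ : B ∘ₗ P₂ = R₂ ∘ₗ C)
    (hpre₂ : C ∘ₗ Q₂ = S₂ ∘ₗ B)
    (hreg₂ : P₂ ∘ₗ Q₂ + T₂ ∘ₗ B = LinearMap.id) :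
    A ∘ₗ (P₁ ∘ₗ P₂) = (R₁ ∘ₗ R₂) ∘ₗ C ∧
    C ∘ₗ (Q₂ ∘ₗ Q₁) = (S₂ ∘ₗ S₁) ∘ₗ A ∧
    (P₁ ∘ₗ P₂) ∘ₗ (Q₂ ∘ₗ Q₁) + (T₁ + P₁ ∘ₗ T₂ ∘ₗ S₁) ∘ₗ A = LinearMap.id ∧
    (LinearMap.ker B ⊓ LinearMap.ker P₁ = ⊥ →
     LinearMap.ker C ⊓ LinearMap.ker P₂ = ⊥ →
     LinearMap.ker C ⊓ LinearMap.ker (P₁ ∘ₗ P₂) = ⊥) :=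
  ⟨LinearMap.IsPostCatalysis.trans hpost₁ hpost₂,
    LinearMap.IsPostCatalysis.trans hpre₂ hpre₁,
    LinearMap.IsPreRegenerated.trans hreg₁ hreg₂ hpre₁,
    LinearMap.ker_inf_ker_comp_eq_bot hpost₂⟩
end

section
/- Let 𝓔, 𝓕, 𝓖, 𝓗 be vector spaces over a field k and let A : 𝓔 → 𝓕, B : 𝓖 → 𝓗, P : 𝓖 → 𝓔, Q : 𝓔 → 𝓖, R : 𝓗 → 𝓕, S : 𝓕 → 𝓗, T : 𝓕 → 𝓔 be linear maps. If A is a proper silvern transmutation of B by philosopher's stone (P,Q,R,S,T), then the restriction of P to ker B is a linear bijection from ker B onto ker A, the restriction of Q to ker A is a linear bijection from ker A onto ker B, and the restriction of P∘Q to ker A is the identity of ker A. -/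
/-!
On `ker A` the regeneration identity reads `P ∘ Q = id`, and the two catalysis identities make
`P` and `Q` map `ker B` and `ker A` into each other. Properness says `P` is injective on `ker B`,
so `Q ∘ P = id` there as well: `P` and `Q` are mutually inverse bijections between the kernels.
-/

open Set LinearMap

namespace LinearMap

variable {k E F G H : Type*} [Semiring k]
  [AddCommMonoid E] [Module k E] [AddCommMonoid F] [Module k F]
  [AddCommMonoid G] [Module k G] [AddCommMonoid H] [Module k H]

theorem mapsTo_ker_of_comp_eq_comp {A : E →ₗ[k] F} {B : G →ₗ[k] H} {P : G →ₗ[k] E}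
    {R : H →ₗ[k] F} (h : A ∘ₗ P = R ∘ₗ B) : MapsTo P (ker B) (ker A) := fun g (hg : B g = 0) => by
  change A (P g) = 0
  rw [← comp_apply, h, comp_apply, hg, map_zero]

theorem leftInvOn_ker_of_comp_add_comp_eq_id {A : E →ₗ[k] F} {P : G →ₗ[k] E} {Q : E →ₗ[k] G}
    {T : F →ₗ[k] E} (h : P ∘ₗ Q + T ∘ₗ A = id) : LeftInvOn P Q (ker A) :=
  fun x (hx : A x = 0) => by simpa [hx] using LinearMap.congr_fun h x

end LinearMap

/-- If `A` is a proper silvern transmutation of `B` by `(P,Q,R,S,T)`, then `P` restricts to a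
linear bijection from `ker B` onto `ker A`, `Q` restricts to a linear bijection from `ker A`
onto `ker B`, and `P∘Q` restricted to `ker A` is the identity. -/
theorem proper_silvern_ker_bijections
    {k : Type*} [Field k]
    {E F G H : Type*}
    [AddCommGroup E] [Module k E] [AddCommGroup F] [Module k F]
    [AddCommGroup G] [Module k G] [AddCommGroup H] [Module k H]
    (A : E →ₗ[k] F) (B : G →ₗ[k] H) (P : G →ₗ[k] E) (Q : E →ₗ[k] G)
    (R : H →ₗ[k] F) (S : F →ₗ[k] H) (T : F →ₗ[k] E)
    (hpost : A ∘ₗ P = R ∘ₗ B)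
    (hpre : B ∘ₗ Q = S ∘ₗ A)
    (hreg : P ∘ₗ Q + T ∘ₗ A = LinearMap.id)
    (hproper : LinearMap.ker B ⊓ LinearMap.ker P = ⊥) :
    (Set.InjOn P (LinearMap.ker B) ∧
      P '' (LinearMap.ker B : Set G) = (LinearMap.ker A : Set E)) ∧
    (Set.InjOn Q (LinearMap.ker A) ∧
      Q '' (LinearMap.ker A : Set E) = (LinearMap.ker B : Set G)) ∧
    (∀ x ∈ LinearMap.ker A, P (Q x) = x) := by
  have hP : MapsTo P (ker B) (ker A) := mapsTo_ker_of_comp_eq_comp hpost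
  have hQ : MapsTo Q (ker A) (ker B) := mapsTo_ker_of_comp_eq_comp hpre
  have hPQ : LeftInvOn P Q (ker A) := leftInvOn_ker_of_comp_add_comp_eq_id hreg
  have hPinj : InjOn P (ker B) := injOn_of_disjoint_ker subset_rfl (disjoint_iff.mpr hproper)
  have hinv : InvOn Q P (ker B) (ker A) := ⟨hPinj.rightInvOn_of_leftInvOn hPQ hP hQ, hPQ⟩
  have hbijP : BijOn P (ker B) (ker A) := hinv.bijOn hP hQ
  have hbijQ : BijOn Q (ker A) (ker B) := hinv.symm.bijOn hQ hP
  exact ⟨⟨hbijP.injOn, hbijP.image_eq⟩, ⟨hbijQ.injOn, hbijQ.image_eq⟩, hPQ⟩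
end

section
/- Let 𝓔, 𝓕, 𝓖, 𝓗 be vector spaces over a field k and let A : 𝓔 → 𝓕 and B : 𝓖 → 𝓗 be linear maps. Suppose there is a linear bijection P₀ from ker B onto ker A, with inverse Q₀ from ker A onto ker B. Then for every linear map P : 𝓖 → 𝓔 whose restriction to ker B equals P₀ and every linear map Q : 𝓔 → 𝓖 whose restriction to ker A equals Q₀, there exist linear maps R : 𝓗 → 𝓕, S : 𝓕 → 𝓗 and T : 𝓕 → 𝓔 satisfying R∘B = A∘P, S∘A = B∘Q and T∘A = id_𝓔 − P∘Q, and for any such (R,S,T), A is a proper silvern transmutation of B by philosopher's stone (P,Q,R,S,T). -/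
private lemma factor_through {k : Type*} [Field k] {M N N' : Type*}
    [AddCommGroup M] [Module k M] [AddCommGroup N] [Module k N]
    [AddCommGroup N'] [Module k N']
    (f : M →ₗ[k] N) (g : M →ₗ[k] N') (h : LinearMap.ker f ≤ LinearMap.ker g) :
    ∃ u : N →ₗ[k] N', u ∘ₗ f = g := by
  set K := LinearMap.ker f
  let fbar : (M ⧸ K) →ₗ[k] N := K.liftQ f le_rfl
  let gbar : (M ⧸ K) →ₗ[k] N' := K.liftQ g h
  have hfker : LinearMap.ker fbar = ⊥ := Submodule.ker_liftQ_eq_bot _ _ _ le_rfl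
  obtain ⟨l, hl⟩ := fbar.exists_leftInverse_of_injective hfker
  refine ⟨gbar ∘ₗ l, ?_⟩
  ext x
  have : f x = fbar (K.mkQ x) := rfl
  simp only [LinearMap.comp_apply, this]
  have := congrArg (fun m => m (K.mkQ x)) hl
  exact congrArg gbar this

/-- If there is a linear bijection `e` from `ker B` onto `ker A` (with inverse `e.symm`),
then for every linear extension `P` of `e` to `G` and every linear extension `Q` of `e.symm`
to `E`, there exist linear maps `R`, `S`, `T` with `R∘B = A∘P`, `S∘A = B∘Q` and
`T∘A = id − P∘Q`, and for any such `(R,S,T)`, `A` is a proper silvern transmutation of `B`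
by philosopher's stone `(P,Q,R,S,T)`. -/
theorem proper_silvern_of_ker_equiv
    {k : Type*} [Field k]
    {E F G H : Type*}
    [AddCommGroup E] [Module k E] [AddCommGroup F] [Module k F]
    [AddCommGroup G] [Module k G] [AddCommGroup H] [Module k H]
    (A : E →ₗ[k] F) (B : G →ₗ[k] H)
    (e : LinearMap.ker B ≃ₗ[k] LinearMap.ker A) :
    ∀ P : G →ₗ[k] E, (∀ x : LinearMap.ker B, P (x : G) = (e x : E)) →
    ∀ Q : E →ₗ[k] G, (∀ y : LinearMap.ker A, Q (y : E) = (e.symm y : G)) →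
    (∃ R : H →ₗ[k] F, ∃ S : F →ₗ[k] H, ∃ T : F →ₗ[k] E,
      R ∘ₗ B = A ∘ₗ P ∧ S ∘ₗ A = B ∘ₗ Q ∧ T ∘ₗ A = LinearMap.id - P ∘ₗ Q) ∧
    (∀ (R : H →ₗ[k] F) (S : F →ₗ[k] H) (T : F →ₗ[k] E),
      R ∘ₗ B = A ∘ₗ P → S ∘ₗ A = B ∘ₗ Q → T ∘ₗ A = LinearMap.id - P ∘ₗ Q →
      (A ∘ₗ P = R ∘ₗ B ∧ B ∘ₗ Q = S ∘ₗ A ∧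
       P ∘ₗ Q + T ∘ₗ A = LinearMap.id ∧
       LinearMap.ker B ⊓ LinearMap.ker P = ⊥)) := by
  intro P hP Q hQ
  constructor
  · have h1 : LinearMap.ker B ≤ LinearMap.ker (A ∘ₗ P) := by
      intro x hx
      have : P x = (e ⟨x, hx⟩ : E) := hP ⟨x, hx⟩
      simp only [LinearMap.mem_ker, LinearMap.comp_apply, this]
      exact (e ⟨x, hx⟩).2
    have h2 : LinearMap.ker A ≤ LinearMap.ker (B ∘ₗ Q) := by
      intro y hy
      have : Q y = (e.symm ⟨y, hy⟩ : G) := hQ ⟨y, hy⟩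
      simp only [LinearMap.mem_ker, LinearMap.comp_apply, this]
      exact (e.symm ⟨y, hy⟩).2
    have h3 : LinearMap.ker A ≤ LinearMap.ker (LinearMap.id - P ∘ₗ Q) := by
      intro y hy
      have hq : Q y = (e.symm ⟨y, hy⟩ : G) := hQ ⟨y, hy⟩
      have hp : P ((e.symm ⟨y, hy⟩ : G)) = (e (e.symm ⟨y, hy⟩) : E) := hP _
      simp only [LinearMap.mem_ker, LinearMap.sub_apply, LinearMap.id_apply,
        LinearMap.comp_apply, hq, hp, LinearEquiv.apply_symm_apply, sub_self]
    obtain ⟨R, hR⟩ := factor_through B (A ∘ₗ P) h1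
    obtain ⟨S, hS⟩ := factor_through A (B ∘ₗ Q) h2
    obtain ⟨T, hT⟩ := factor_through A (LinearMap.id - P ∘ₗ Q) h3
    exact ⟨R, S, T, hR, hS, hT⟩
  · intro R S T hR hS hT
    refine ⟨hR.symm, hS.symm, ?_, ?_⟩
    · rw [hT]; abel
    · ext x
      simp only [Submodule.mem_inf, LinearMap.mem_ker, Submodule.mem_bot]
      constructor
      · rintro ⟨hxB, hxP⟩
        have hx : P ((⟨x, hxB⟩ : LinearMap.ker B) : G) = (e ⟨x, hxB⟩ : E) := hP _
        have : (e ⟨x, hxB⟩ : E) = 0 := by rw [← hx]; exact hxP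
        have : e ⟨x, hxB⟩ = 0 := Subtype.ext this
        have : (⟨x, hxB⟩ : LinearMap.ker B) = 0 := by
          apply e.injective; simpa using this
        exact congrArg Subtype.val this
      · rintro rfl; simp
end

section
/- For every ν ∈ ℝ and every smooth vector field v : ℝ² → ℝ², the identity 𝔏ν(P v) = R(Δv) holds pointwise on ℝ², where Δ acts componentwise on v; that is, the 2D Lamé–Navier operator 𝔏ν is a post-catalysis of the componentwise Laplace operator Δ^{⊗2} by the differential operators (P,R). -/
noncomputable section

/-- The plane `ℝ²` as a Euclidean space. -/
abbrev E2 : Type := EuclideanSpace ℝ (Fin 2)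

/-- `i`-th partial derivative of a scalar function on `ℝ²`. -/
def pd2 (i : Fin 2) (f : E2 → ℝ) (x : E2) : ℝ :=
  fderiv ℝ f x (EuclideanSpace.single i 1)

/-- Laplacian of a scalar function on `ℝ²`. -/
def lap2 (f : E2 → ℝ) (x : E2) : ℝ :=
  ∑ i, pd2 i (pd2 i f) x

/-- Divergence of a vector field on `ℝ²`. -/
def div2 (v : E2 → E2) (x : E2) : ℝ :=
  ∑ i, pd2 i (fun y => v y i) x

/-- 2D rotational `rot v = ∂₁v₂ − ∂₂v₁` of a vector field on `ℝ²`. -/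
def rot2 (v : E2 → E2) (x : E2) : ℝ :=
  pd2 0 (fun y => v y 1) x - pd2 1 (fun y => v y 0) x

/-- Gradient of a scalar function on `ℝ²`. -/
def grad2 (p : E2 → ℝ) (x : E2) : E2 :=
  ∑ i, pd2 i p x • EuclideanSpace.single i 1

/-- Componentwise Laplacian `Δ^{⊗2}` of a vector field on `ℝ²`. -/
def vecLap2 (u : E2 → E2) (x : E2) : E2 :=
  ∑ i, lap2 (fun y => u y i) x • EuclideanSpace.single i 1

/-- Rotation of `x = (x₁,x₂)` by `+π/2`: `x^⊥ = (−x₂, x₁)`. -/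
def perp2 (x : E2) : E2 :=
  (-(x 1)) • EuclideanSpace.single 0 1 + (x 0) • EuclideanSpace.single 1 1

/-- The 2D Lamé–Navier operator `𝔏ν (u,p) = (Δu − ∇p, div u − ν p)`. -/
def lame2 (ν : ℝ) (u : E2 → E2) (p : E2 → ℝ) (x : E2) : E2 × ℝ :=
  (vecLap2 u x - grad2 p x, div2 u x - ν * p x)

/-- First (vector) component of the operator `P`:
`(1−2ν) v − ½ x div v + ½ x^⊥ rot v`. -/
def Pfst2 (ν : ℝ) (v : E2 → E2) (x : E2) : E2 :=
  (1 - 2 * ν) • v x - (div2 v x / 2) • x + (rot2 v x / 2) • perp2 x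

/-- Second (scalar) component of the operator `P`: `−2 div v`. -/
def Psnd2 (v : E2 → E2) (x : E2) : ℝ :=
  -2 * div2 v x

/-- The operator `R v = ((2−2ν) v − ½ x div v + ½ x^⊥ rot v, −½ x·v)`. -/
def Rop2 (ν : ℝ) (v : E2 → E2) (x : E2) : E2 × ℝ :=
  ((2 - 2 * ν) • v x - (div2 v x / 2) • x + (rot2 v x / 2) • perp2 x,
    -(∑ i, x i * v x i) / 2)

namespace Aux


lemma contDiff_pd2 {f : E2 → ℝ} (hf : ContDiff ℝ (⊤ : ℕ∞) f) (i : Fin 2) :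
    ContDiff ℝ (⊤ : ℕ∞) (pd2 i f) :=
  (hf.fderiv_right le_rfl).clm_apply contDiff_const

lemma diffAt {f : E2 → ℝ} (hf : ContDiff ℝ (⊤ : ℕ∞) f) (x : E2) : DifferentiableAt ℝ f x :=
  (hf.differentiable (by simp)).differentiableAt

lemma pd2_add {f g : E2 → ℝ} (hf : ContDiff ℝ (⊤ : ℕ∞) f) (hg : ContDiff ℝ (⊤ : ℕ∞) g) (i : Fin 2) :
    pd2 i (fun y => f y + g y) = fun x => pd2 i f x + pd2 i g x := by
  funext x
  simp [pd2, fderiv_fun_add (diffAt hf x) (diffAt hg x)]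

lemma pd2_sub {f g : E2 → ℝ} (hf : ContDiff ℝ (⊤ : ℕ∞) f) (hg : ContDiff ℝ (⊤ : ℕ∞) g) (i : Fin 2) :
    pd2 i (fun y => f y - g y) = fun x => pd2 i f x - pd2 i g x := by
  funext x
  simp [pd2, fderiv_fun_sub (diffAt hf x) (diffAt hg x)]

lemma pd2_const_mul {f : E2 → ℝ} (hf : ContDiff ℝ (⊤ : ℕ∞) f) (c : ℝ) (i : Fin 2) :
    pd2 i (fun y => c * f y) = fun x => c * pd2 i f x := by
  funext x
  simp [pd2, fderiv_const_mul (diffAt hf x) c]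

lemma pd2_mul {f g : E2 → ℝ} (hf : ContDiff ℝ (⊤ : ℕ∞) f) (hg : ContDiff ℝ (⊤ : ℕ∞) g) (i : Fin 2) :
    pd2 i (fun y => f y * g y) = fun x => pd2 i f x * g x + f x * pd2 i g x := by
  funext x
  simp [pd2, fderiv_fun_mul (diffAt hf x) (diffAt hg x)]
  ring

lemma contDiff_coord (j : Fin 2) : ContDiff ℝ (⊤ : ℕ∞) (fun y : E2 => y j) :=
  (EuclideanSpace.proj (𝕜 := ℝ) (ι := Fin 2) j).contDiff

lemma pd2_coord (i j : Fin 2) :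
    pd2 i (fun y : E2 => y j) = fun _ => if j = i then (1:ℝ) else 0 := by
  funext x
  have h : (fun y : E2 => y j) = (EuclideanSpace.proj (𝕜 := ℝ) (ι := Fin 2) j : E2 →L[ℝ] ℝ) := rfl
  rw [pd2, h, ContinuousLinearMap.fderiv]
  simp [EuclideanSpace.single_apply]

lemma pd2_comm {f : E2 → ℝ} (hf : ContDiff ℝ (⊤ : ℕ∞) f) (i j : Fin 2) :
    pd2 i (pd2 j f) = pd2 j (pd2 i f) := by
  funext x
  have hsymm : IsSymmSndFDerivAt ℝ f x := hf.contDiffAt.isSymmSndFDerivAt (by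
    rw [minSmoothness_of_isRCLikeNormedField]; exact WithTop.coe_le_coe.mpr (le_top : (2 : ℕ∞) ≤ ⊤))
  have hd : DifferentiableAt ℝ (fderiv ℝ f) x :=
    ((hf.fderiv_right (m := (⊤ : ℕ∞)) le_rfl).differentiable (by simp)).differentiableAt
  have key : ∀ k l : Fin 2, pd2 k (pd2 l f) x
      = fderiv ℝ (fderiv ℝ f) x (EuclideanSpace.single k 1) (EuclideanSpace.single l 1) := by
    intro k l
    have h1 : pd2 l f = fun y => (fderiv ℝ f y) (EuclideanSpace.single l 1) := rfl
    rw [pd2, h1, fderiv_clm_apply hd (differentiableAt_const _)]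
    simp
  rw [key, key, hsymm]

lemma pd2_mul_const {f : E2 → ℝ} (hf : ContDiff ℝ (⊤ : ℕ∞) f) (c : ℝ) (i : Fin 2) :
    pd2 i (fun y => f y * c) = fun x => pd2 i f x * c := by
  funext x
  rw [pd2, fderiv_mul_const (diffAt hf x) c]
  simp [pd2, mul_comm]

lemma pd2_mul_coord {g : E2 → ℝ} (hg : ContDiff ℝ (⊤ : ℕ∞) g) (i j : Fin 2) :
    pd2 i (fun y => g y * y j) = fun x => pd2 i g x * x j + g x * (if j = i then 1 else 0) := by
  simp [pd2_mul hg (contDiff_coord j) i, pd2_coord]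

lemma lap2_add {f g : E2 → ℝ} (hf : ContDiff ℝ (⊤ : ℕ∞) f) (hg : ContDiff ℝ (⊤ : ℕ∞) g) (x : E2) :
    lap2 (fun y => f y + g y) x = lap2 f x + lap2 g x := by
  simp [lap2, pd2_add hf hg, pd2_add (contDiff_pd2 hf _) (contDiff_pd2 hg _),
    Finset.sum_add_distrib]

lemma lap2_sub {f g : E2 → ℝ} (hf : ContDiff ℝ (⊤ : ℕ∞) f) (hg : ContDiff ℝ (⊤ : ℕ∞) g) (x : E2) :
    lap2 (fun y => f y - g y) x = lap2 f x - lap2 g x := by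
  simp [lap2, pd2_sub hf hg, pd2_sub (contDiff_pd2 hf _) (contDiff_pd2 hg _),
    Finset.sum_sub_distrib]

lemma lap2_const_mul {f : E2 → ℝ} (hf : ContDiff ℝ (⊤ : ℕ∞) f) (c : ℝ) (x : E2) :
    lap2 (fun y => c * f y) x = c * lap2 f x := by
  simp [lap2, pd2_const_mul hf c, pd2_const_mul (contDiff_pd2 hf _) c, Fin.sum_univ_two]
  ring

lemma lap2_mul_coord {g : E2 → ℝ} (hg : ContDiff ℝ (⊤ : ℕ∞) g) (j : Fin 2) (x : E2) :
    lap2 (fun y => g y * y j) x = x j * lap2 g x + 2 * pd2 j g x := by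
  simp only [lap2, Fin.sum_univ_two]
  rw [pd2_mul_coord hg 0 j, pd2_mul_coord hg 1 j,
    pd2_add ((contDiff_pd2 hg 0).mul (contDiff_coord j)) (hg.mul contDiff_const),
    pd2_add ((contDiff_pd2 hg 1).mul (contDiff_coord j)) (hg.mul contDiff_const)]
  rw [pd2_mul_coord (contDiff_pd2 hg 0) 0 j, pd2_mul_coord (contDiff_pd2 hg 1) 1 j,
    pd2_mul_const hg _ 0, pd2_mul_const hg _ 1]
  fin_cases j <;> simp <;> ring

lemma lap2_pd2_comm {g : E2 → ℝ} (hg : ContDiff ℝ (⊤ : ℕ∞) g) (i : Fin 2) (x : E2) :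
    lap2 (pd2 i g) x = pd2 i (lap2 g) x := by
  have hl : lap2 g = fun y => pd2 0 (pd2 0 g) y + pd2 1 (pd2 1 g) y := by
    funext y; simp [lap2, Fin.sum_univ_two]
  have A : ∀ k : Fin 2, pd2 k (pd2 k (pd2 i g)) = pd2 i (pd2 k (pd2 k g)) := by
    intro k
    rw [pd2_comm hg k i, pd2_comm (contDiff_pd2 hg k) k i]
  rw [hl, pd2_add (contDiff_pd2 (contDiff_pd2 hg 0) 0) (contDiff_pd2 (contDiff_pd2 hg 1) 1)]
  simp [lap2, Fin.sum_univ_two, A]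


lemma vecLap2_apply (u : E2 → E2) (x : E2) (j : Fin 2) :
    vecLap2 u x j = lap2 (fun y => u y j) x := by
  fin_cases j <;>
    simp [vecLap2, Fin.sum_univ_two, EuclideanSpace.single_apply, PiLp.add_apply,
      PiLp.smul_apply]

lemma grad2_apply (p : E2 → ℝ) (x : E2) (j : Fin 2) : grad2 p x j = pd2 j p x := by
  fin_cases j <;>
    simp [grad2, Fin.sum_univ_two, EuclideanSpace.single_apply, PiLp.add_apply,
      PiLp.smul_apply]

lemma perp2_apply0 (x : E2) : perp2 x 0 = -(x 1) := by
  simp [perp2, EuclideanSpace.single_apply, PiLp.add_apply, PiLp.smul_apply]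

lemma perp2_apply1 (x : E2) : perp2 x 1 = x 0 := by
  simp [perp2, EuclideanSpace.single_apply, PiLp.add_apply, PiLp.smul_apply]

end Aux

open Aux in
theorem lame2_post_catalysis' (ν : ℝ) (v : E2 → E2) (hv : ContDiff ℝ (⊤ : ℕ∞) v) (x : E2) :
    lame2 ν (Pfst2 ν v) (Psnd2 v) x = Rop2 ν (fun y => vecLap2 v y) x := by
  have ha0 : ContDiff ℝ (⊤ : ℕ∞) (fun y => v y 0) :=
    (EuclideanSpace.proj (𝕜 := ℝ) (ι := Fin 2) (0 : Fin 2)).contDiff.comp hv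
  have ha1 : ContDiff ℝ (⊤ : ℕ∞) (fun y => v y 1) :=
    (EuclideanSpace.proj (𝕜 := ℝ) (ι := Fin 2) (1 : Fin 2)).contDiff.comp hv
  have hdf : div2 v = fun y => pd2 0 (fun z => v z 0) y + pd2 1 (fun z => v z 1) y := by
    funext y; simp [div2, Fin.sum_univ_two]
  have hrf : rot2 v = fun y => pd2 0 (fun z => v z 1) y - pd2 1 (fun z => v z 0) y := rfl
  have hd : ContDiff ℝ (⊤ : ℕ∞) (div2 v) := by
    rw [hdf]; exact (contDiff_pd2 ha0 0).add (contDiff_pd2 ha1 1)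
  have hr : ContDiff ℝ (⊤ : ℕ∞) (rot2 v) := by
    rw [hrf]; exact (contDiff_pd2 ha1 0).sub (contDiff_pd2 ha0 1)
  -- components of Pfst2
  have hP0 : (fun y => Pfst2 ν v y 0) = fun y =>
      (1 - 2*ν) * v y 0 + (-(1/2)) * (div2 v y * y 0) + (-(1/2)) * (rot2 v y * y 1) := by
    funext y
    simp [Pfst2, perp2, EuclideanSpace.single_apply, PiLp.add_apply, PiLp.sub_apply,
      PiLp.smul_apply]
    ring
  have hP1 : (fun y => Pfst2 ν v y 1) = fun y =>
      (1 - 2*ν) * v y 1 + (-(1/2)) * (div2 v y * y 1) + (1/2) * (rot2 v y * y 0) := by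
    funext y
    simp [Pfst2, perp2, EuclideanSpace.single_apply, PiLp.add_apply, PiLp.sub_apply,
      PiLp.smul_apply]
    ring
  have hA0 : ContDiff ℝ (⊤ : ℕ∞) (fun y : E2 => (1 - 2*ν) * v y 0) := contDiff_const.mul ha0
  have hA1 : ContDiff ℝ (⊤ : ℕ∞) (fun y : E2 => (1 - 2*ν) * v y 1) := contDiff_const.mul ha1
  have hB0 : ContDiff ℝ (⊤ : ℕ∞) (fun y : E2 => (-(1/2 : ℝ)) * (div2 v y * y 0)) :=
    contDiff_const.mul (hd.mul (contDiff_coord 0))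
  have hB1 : ContDiff ℝ (⊤ : ℕ∞) (fun y : E2 => (-(1/2 : ℝ)) * (div2 v y * y 1)) :=
    contDiff_const.mul (hd.mul (contDiff_coord 1))
  have hC0 : ContDiff ℝ (⊤ : ℕ∞) (fun y : E2 => (-(1/2 : ℝ)) * (rot2 v y * y 1)) :=
    contDiff_const.mul (hr.mul (contDiff_coord 1))
  have hC1 : ContDiff ℝ (⊤ : ℕ∞) (fun y : E2 => (1/2 : ℝ) * (rot2 v y * y 0)) :=
    contDiff_const.mul (hr.mul (contDiff_coord 0))
  -- laplacians of the components of Pfst2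
  have L0 : lap2 (fun y => Pfst2 ν v y 0) x =
      (1 - 2*ν) * lap2 (fun z => v z 0) x
        + (-(1/2)) * (x 0 * lap2 (div2 v) x + 2 * pd2 0 (div2 v) x)
        + (-(1/2)) * (x 1 * lap2 (rot2 v) x + 2 * pd2 1 (rot2 v) x) := by
    rw [hP0, lap2_add (hA0.add hB0) hC0, lap2_add hA0 hB0, lap2_const_mul ha0,
      lap2_const_mul (hd.mul (contDiff_coord 0)), lap2_const_mul (hr.mul (contDiff_coord 1)),
      lap2_mul_coord hd 0, lap2_mul_coord hr 1]
  have L1 : lap2 (fun y => Pfst2 ν v y 1) x =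
      (1 - 2*ν) * lap2 (fun z => v z 1) x
        + (-(1/2)) * (x 1 * lap2 (div2 v) x + 2 * pd2 1 (div2 v) x)
        + (1/2) * (x 0 * lap2 (rot2 v) x + 2 * pd2 0 (rot2 v) x) := by
    rw [hP1, lap2_add (hA1.add hB1) hC1, lap2_add hA1 hB1, lap2_const_mul ha1,
      lap2_const_mul (hd.mul (contDiff_coord 1)), lap2_const_mul (hr.mul (contDiff_coord 0)),
      lap2_mul_coord hd 1, lap2_mul_coord hr 0]
  -- first partials of the components of Pfst2
  have D0 : pd2 0 (fun y => Pfst2 ν v y 0) x =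
      (1 - 2*ν) * pd2 0 (fun z => v z 0) x
        + (-(1/2)) * (pd2 0 (div2 v) x * x 0 + div2 v x * 1)
        + (-(1/2)) * (pd2 0 (rot2 v) x * x 1 + rot2 v x * 0) := by
    rw [hP0]
    rw [pd2_add (hA0.add hB0) hC0, pd2_add hA0 hB0, pd2_const_mul ha0,
      pd2_const_mul (hd.mul (contDiff_coord 0)), pd2_const_mul (hr.mul (contDiff_coord 1)),
      pd2_mul_coord hd 0 0, pd2_mul_coord hr 0 1]
    norm_num
  have D1 : pd2 1 (fun y => Pfst2 ν v y 1) x =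
      (1 - 2*ν) * pd2 1 (fun z => v z 1) x
        + (-(1/2)) * (pd2 1 (div2 v) x * x 1 + div2 v x * 1)
        + (1/2) * (pd2 1 (rot2 v) x * x 0 + rot2 v x * 0) := by
    rw [hP1]
    rw [pd2_add (hA1.add hB1) hC1, pd2_add hA1 hB1, pd2_const_mul ha1,
      pd2_const_mul (hd.mul (contDiff_coord 1)), pd2_const_mul (hr.mul (contDiff_coord 0)),
      pd2_mul_coord hd 1 1, pd2_mul_coord hr 1 0]
    norm_num
  -- derivative of Psnd2
  have hPsnd : Psnd2 v = fun y => (-2 : ℝ) * div2 v y := rfl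
  have PS : ∀ j : Fin 2, pd2 j (Psnd2 v) x = -2 * pd2 j (div2 v) x := by
    intro j
    rw [hPsnd, pd2_const_mul hd (-2) j]
  -- components of the vector Laplacian of v
  have hΔ0 : (fun y => vecLap2 v y 0) = fun y => lap2 (fun z => v z 0) y := by
    funext y; exact vecLap2_apply v y 0
  have hΔ1 : (fun y => vecLap2 v y 1) = fun y => lap2 (fun z => v z 1) y := by
    funext y; exact vecLap2_apply v y 1
  -- commuting identities
  have I1 : lap2 (div2 v) x
      = pd2 0 (fun y => lap2 (fun z => v z 0) y) x + pd2 1 (fun y => lap2 (fun z => v z 1) y) x := by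
    rw [hdf, lap2_add (contDiff_pd2 ha0 0) (contDiff_pd2 ha1 1),
      lap2_pd2_comm ha0 0 x, lap2_pd2_comm ha1 1 x]
  have I2 : lap2 (rot2 v) x
      = pd2 0 (fun y => lap2 (fun z => v z 1) y) x - pd2 1 (fun y => lap2 (fun z => v z 0) y) x := by
    rw [hrf, lap2_sub (contDiff_pd2 ha1 0) (contDiff_pd2 ha0 1),
      lap2_pd2_comm ha1 0 x, lap2_pd2_comm ha0 1 x]
  have I3 : lap2 (fun z => v z 0) x = pd2 0 (div2 v) x - pd2 1 (rot2 v) x := by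
    rw [hdf, hrf,
      pd2_add (contDiff_pd2 ha0 0) (contDiff_pd2 ha1 1),
      pd2_sub (contDiff_pd2 ha1 0) (contDiff_pd2 ha0 1),
      pd2_comm ha1 0 1]
    simp [lap2, Fin.sum_univ_two]
    ring
  have I4 : lap2 (fun z => v z 1) x = pd2 1 (div2 v) x + pd2 0 (rot2 v) x := by
    rw [hdf, hrf,
      pd2_add (contDiff_pd2 ha0 0) (contDiff_pd2 ha1 1),
      pd2_sub (contDiff_pd2 ha1 0) (contDiff_pd2 ha0 1),
      pd2_comm ha0 0 1]
    simp [lap2, Fin.sum_univ_two]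
    ring
  -- div and rot of the vector Laplacian
  have hdΔ : div2 (fun y => vecLap2 v y) x
      = pd2 0 (fun y => lap2 (fun z => v z 0) y) x + pd2 1 (fun y => lap2 (fun z => v z 1) y) x := by
    simp only [div2, Fin.sum_univ_two]
    rw [hΔ0, hΔ1]
  have hrΔ : rot2 (fun y => vecLap2 v y) x
      = pd2 0 (fun y => lap2 (fun z => v z 1) y) x - pd2 1 (fun y => lap2 (fun z => v z 0) y) x := by
    simp only [rot2]
    rw [hΔ0, hΔ1]
  -- now the main computation
  refine Prod.ext ?_ ?_
  · show vecLap2 (Pfst2 ν v) x - grad2 (Psnd2 v) x = _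
    ext j
    fin_cases j
    · show (vecLap2 (Pfst2 ν v) x - grad2 (Psnd2 v) x) 0 = _
      rw [PiLp.sub_apply, vecLap2_apply, grad2_apply, PS 0]
      show _ = ((2 - 2 * ν) • vecLap2 v x - (div2 (fun y => vecLap2 v y) x / 2) • x
          + (rot2 (fun y => vecLap2 v y) x / 2) • perp2 x) 0
      rw [PiLp.add_apply, PiLp.sub_apply, PiLp.smul_apply, PiLp.smul_apply, PiLp.smul_apply,
        perp2_apply0, vecLap2_apply, hdΔ, hrΔ, L0, I1, I2]
      simp only [smul_eq_mul]
      linear_combination -I3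
    · show (vecLap2 (Pfst2 ν v) x - grad2 (Psnd2 v) x) 1 = _
      rw [PiLp.sub_apply, vecLap2_apply, grad2_apply, PS 1]
      show _ = ((2 - 2 * ν) • vecLap2 v x - (div2 (fun y => vecLap2 v y) x / 2) • x
          + (rot2 (fun y => vecLap2 v y) x / 2) • perp2 x) 1
      rw [PiLp.add_apply, PiLp.sub_apply, PiLp.smul_apply, PiLp.smul_apply, PiLp.smul_apply,
        perp2_apply1, vecLap2_apply, hdΔ, hrΔ, L1, I1, I2]
      simp only [smul_eq_mul]
      linear_combination -I4
  · show div2 (Pfst2 ν v) x - ν * Psnd2 v x = -(∑ i, x i * vecLap2 v x i) / 2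
    have hdP : div2 (Pfst2 ν v) x
        = pd2 0 (fun y => Pfst2 ν v y 0) x + pd2 1 (fun y => Pfst2 ν v y 1) x := by
      simp [div2, Fin.sum_univ_two]
    have hdvx : div2 v x = pd2 0 (fun z => v z 0) x + pd2 1 (fun z => v z 1) x := by
      rw [hdf]
    rw [hdP, D0, D1, hPsnd, Fin.sum_univ_two, vecLap2_apply, vecLap2_apply]
    linear_combination (1/2 * x 0) * I3 + (1/2 * x 1) * I4 + (2 * ν - 1) * hdvx

/-- The 2D Lamé–Navier operator `𝔏ν` is a post-catalysis of the componentwise Laplace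
operator `Δ^{⊗2}` by the differential operators `(P,R)`: for every `ν ∈ ℝ` and every smooth
vector field `v : ℝ² → ℝ²`, `𝔏ν(P v) = R(Δv)` pointwise. -/
theorem lame2_post_catalysis (ν : ℝ) (v : E2 → E2) (hv : ContDiff ℝ (⊤ : ℕ∞) v) (x : E2) :
    lame2 ν (Pfst2 ν v) (Psnd2 v) x = Rop2 ν (fun y => vecLap2 v y) x := by
  exact lame2_post_catalysis' ν v hv x

end
end
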